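/- Let ∇ be a connection on L and define s : L → J by s(X) := (X, −∇_• X), where ∇_• X ∈ Hom_A(Der_R(A), L) is the A-linear map V ↦ ∇_V X. Then s preserves brackets, i.e. s(⁅X, Y⁆) = ⁅s(X), s(Y)⁆_J for all X, Y ∈ L, if and only if ∇ is a Cartan connection. (Proposition 5.3: ∇ is compatible with the bracket iff the associated splitting 𝔤 → J¹𝔤 is a Lie algebroid morphism.) -/
import Mathlib


variable {R A L : Type*} [CommRing R] [CommRing A] [Algebra R A]
  [LieRing L] [LieAlgebra R L] [Module A L]
  [IsScalarTower R A L] [SMulCommClass R A L] [SMulCommClass A R L]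

/-- The induced `𝔤`-connection on derivations: `∇̄_X V := ρ(∇_V X) + ⁅ρ(X), V⁆`. -/
def barDer (ρ : L →ₗ[A] Derivation R A A) (D : Derivation R A A → L → L)
    (X : L) (V : Derivation R A A) : Derivation R A A :=
  ρ (D V X) + ⁅ρ X, V⁆

/-- `D` is a connection on `L`: additive in both arguments, `A`-linear in the
derivation argument, and satisfying the Leibniz rule. -/
def IsConnection (D : Derivation R A A → L → L) : Prop :=
  (∀ (V W : Derivation R A A) (X : L), D (V + W) X = D V X + D W X) ∧
  (∀ (V : Derivation R A A) (X Y : L), D V (X + Y) = D V X + D V Y) ∧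
  (∀ (a : A) (V : Derivation R A A) (X : L), D (a • V) X = a • D V X) ∧
  (∀ (V : Derivation R A A) (a : A) (X : L), D V (a • X) = a • D V X + V a • X)

/-- `D` is a Cartan connection: it is compatible with the bracket of `L`. -/
def IsCartanConnection (ρ : L →ₗ[A] Derivation R A A)
    (D : Derivation R A A → L → L) : Prop :=
  ∀ (V : Derivation R A A) (X Y : L),
    D V ⁅X, Y⁆ = ⁅D V X, Y⁆ + ⁅X, D V Y⁆
      + D (barDer ρ D Y V) X - D (barDer ρ D X V) Y

/-- The bracket `[φ₁, φ₂] := φ₂ ∘ (ρ ∘ φ₁) − φ₁ ∘ (ρ ∘ φ₂)` on `Hom_A(Der_R(A), L)`. -/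
def homBracket (ρ : L →ₗ[A] Derivation R A A)
    (φ₁ φ₂ : Derivation R A A →ₗ[A] L) : Derivation R A A →ₗ[A] L :=
  φ₂.comp (ρ.comp φ₁) - φ₁.comp (ρ.comp φ₂)

/-- The bracket `⁅(X₁,φ₁),(X₂,φ₂)⁆_J := (⁅X₁,X₂⁆, [φ₁,φ₂] + κ_{X₁} φ₂ − κ_{X₂} φ₁)` on
`J = L × Hom_A(Der_R(A), L)`, given the operation `κ`. -/
def jetBracket (ρ : L →ₗ[A] Derivation R A A)
    (κ : L → (Derivation R A A →ₗ[A] L) → (Derivation R A A →ₗ[A] L))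
    (p q : L × (Derivation R A A →ₗ[A] L)) : L × (Derivation R A A →ₗ[A] L) :=
  (⁅p.1, q.1⁆, homBracket ρ p.2 q.2 + κ p.1 q.2 - κ q.1 p.2)

/-- The splitting `s(X) := (X, −∇_• X)` of jets preserves brackets,
i.e. `s(⁅X, Y⁆) = ⁅s(X), s(Y)⁆_J` for all `X, Y`, if and only if `∇` is a
Cartan connection. -/
theorem splitting_is_morphism_iff_cartan
    (ρ : L →ₗ[A] Derivation R A A)
    (hanchor : ∀ X Y : L, ρ ⁅X, Y⁆ = ⁅ρ X, ρ Y⁆)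
    (hleib : ∀ (X : L) (a : A) (Y : L), ⁅X, a • Y⁆ = a • ⁅X, Y⁆ + ρ X a • Y)
    (κ : L → (Derivation R A A →ₗ[A] L) → (Derivation R A A →ₗ[A] L))
    (hκ : ∀ (X : L) (φ : Derivation R A A →ₗ[A] L) (V : Derivation R A A),
      κ X φ V = ⁅X, φ V⁆ + φ ⁅V, ρ X⁆)
    (D : Derivation R A A → L → L) (hD : IsConnection D)
    (nablaDot : L → (Derivation R A A →ₗ[A] L))
    (hdot : ∀ (X : L) (V : Derivation R A A), nablaDot X V = D V X) :
    (∀ X Y : L,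
        ((⁅X, Y⁆, -nablaDot ⁅X, Y⁆) : L × (Derivation R A A →ₗ[A] L)) =
          jetBracket ρ κ (X, -nablaDot X) (Y, -nablaDot Y)) ↔
      IsCartanConnection ρ D := by
  obtain ⟨hD1, hD2, hD3, hD4⟩ := hD
  have Dneg : ∀ (V : Derivation R A A) (X : L), D (-V) X = -(D V X) := fun V X => by
    rw [← neg_one_smul A V, hD3, neg_one_smul]
  have skew : ∀ (V W : Derivation R A A), ⁅V, W⁆ = -⁅W, V⁆ := fun V W => by
    rw [← lie_skew]
  have key : ∀ (X Y : L) (V : Derivation R A A),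
      (-(nablaDot ⁅X, Y⁆) : Derivation R A A →ₗ[A] L) V =
        (homBracket ρ (-nablaDot X) (-nablaDot Y) + κ X (-nablaDot Y)
          - κ Y (-nablaDot X)) V ↔
      D V ⁅X, Y⁆ = ⁅D V X, Y⁆ + ⁅X, D V Y⁆
        + D (barDer ρ D Y V) X - D (barDer ρ D X V) Y := by
    intro X Y V
    simp only [homBracket, barDer, hκ, hdot, LinearMap.sub_apply, LinearMap.add_apply,
      LinearMap.neg_apply, LinearMap.coe_comp, Function.comp_apply, map_neg, hD1,
      Dneg, lie_neg, neg_neg]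
    rw [skew (ρ Y) V, skew (ρ X) V, Dneg, Dneg,
      show (⁅Y, D V X⁆ : L) = -⁅D V X, Y⁆ from by rw [← lie_skew]]
    constructor <;> intro h
    · rw [← sub_eq_zero] at h ⊢
      rw [← neg_eq_zero] at h
      rw [← h]
      abel
    · rw [← sub_eq_zero] at h ⊢
      rw [← neg_eq_zero] at h
      rw [← h]
      abel
  constructor
  · intro h V X Y
    have h2 := LinearMap.congr_fun (congrArg Prod.snd (h X Y)) V
    simp only [jetBracket] at h2
    exact (key X Y V).mp h2
  · intro h X Y
    have h2 : (-nablaDot ⁅X, Y⁆ : Derivation R A A →ₗ[A] L) =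
        homBracket ρ (-nablaDot X) (-nablaDot Y) + κ X (-nablaDot Y) - κ Y (-nablaDot X) :=
      LinearMap.ext fun V => (key X Y V).mpr (h V X Y)
    simp only [jetBracket]
    exact Prod.ext rfl h2
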